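/- Let A be a nonempty finite set of treatments, let (X, μ) be a probability space, and for each a ∈ A let f_a : X → ℝ be an integrable measurable function. Let 𝒢₀, 𝒢₁, …, 𝒢_k be a sequence of groupings of A such that 𝒢_{t+1} is finer than 𝒢_t for each t = 0, 1, …, k − 1 (as arises from cutting a hierarchical clustering tree at successively deeper levels). Then the optimal values are nondecreasing along the sequence: V*(𝒢₀) ≤ V*(𝒢₁) ≤ … ≤ V*(𝒢_k). -/

import Mathlib

/-!
Pointwise in `x`, the average of the responses over a group `G` of the coarser grouping is a
weighted average, with weights `|G'| / |G|`, of the averages over the finer groups `G' ⊆ G`,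
so it is at most the largest of them. Refining therefore raises the integrand pointwise, and
integrating and chaining the steps gives monotonicity along the sequence.
-/

open MeasureTheory

/-- The average of `v` over a finite set `G`. -/
noncomputable def avgOn {α : Type*} (v : α → ℝ) (G : Finset α) : ℝ :=
  (G.card : ℝ)⁻¹ * ∑ a ∈ G, v a

/-- The maximum of `g` over a finite family of groups (junk value `0` when empty). -/
noncomputable def groupMax {α : Type*} (𝒢 : Finset (Finset α)) (g : Finset α → ℝ) : ℝ :=
  if h : 𝒢.Nonempty then 𝒢.sup' h g else 0

/-- `𝒢` is a grouping (partition into nonempty subsets) of the finite treatment set `A`. -/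
def IsGrouping {α : Type*} [DecidableEq α] (A : Finset α) (𝒢 : Finset (Finset α)) : Prop :=
  (∀ G ∈ 𝒢, G.Nonempty) ∧
  (∀ G ∈ 𝒢, ∀ G' ∈ 𝒢, G ≠ G' → Disjoint G G') ∧
  𝒢.biUnion id = A

/-- `𝒢'` is finer than `𝒢`: every group of `𝒢'` is contained in some group of `𝒢`
(equivalently, for partitions, every group of `𝒢` is a union of groups of `𝒢'`). -/
def Finer {α : Type*} (𝒢' 𝒢 : Finset (Finset α)) : Prop :=
  ∀ G' ∈ 𝒢', ∃ G ∈ 𝒢, G' ⊆ G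

/-- The optimal value of a grouping `𝒢`:
`V*(𝒢) = ∫ max_{G ∈ 𝒢} |G|⁻¹ ∑_{a ∈ G} f_a(x) dμ(x)`. -/
noncomputable def optVal {α X : Type*} [MeasurableSpace X] (μ : Measure X)
    (f : α → X → ℝ) (𝒢 : Finset (Finset α)) : ℝ :=
  ∫ x, groupMax 𝒢 (fun G => avgOn (fun a => f a x) G) ∂μ

open Finset

section Grouping

variable {α : Type*} [DecidableEq α] {A : Finset α} {𝒢 𝒢' : Finset (Finset α)}

lemma IsGrouping.subset (h : IsGrouping A 𝒢) {G : Finset α} (hG : G ∈ 𝒢) : G ⊆ A :=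
  h.2.2 ▸ subset_biUnion_of_mem id hG

lemma IsGrouping.nonempty_iff (h : IsGrouping A 𝒢) : 𝒢.Nonempty ↔ A.Nonempty := by
  refine ⟨fun ⟨G, hG⟩ => (h.1 G hG).mono (h.subset hG), fun ⟨a, ha⟩ => ?_⟩
  obtain ⟨G, hG, -⟩ := mem_biUnion.mp (h.2.2 ▸ ha)
  exact ⟨G, hG⟩

lemma IsGrouping.biUnion_filter_subset_eq_of_finer (h : IsGrouping A 𝒢) (h' : IsGrouping A 𝒢')
    (hf : Finer 𝒢' 𝒢) {G : Finset α} (hG : G ∈ 𝒢) : (𝒢'.filter (· ⊆ G)).biUnion id = G := by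
  refine Subset.antisymm (biUnion_subset.mpr fun G' hG' => (mem_filter.mp hG').2) fun a ha => ?_
  obtain ⟨G', hG', haG'⟩ := mem_biUnion.mp (h'.2.2 ▸ h.subset hG ha)
  obtain ⟨H, hH, hG'H⟩ := hf G' hG'
  have hGH : G = H := by
    by_contra hne
    exact disjoint_left.mp (h.2.1 G hG H hH hne) ha (hG'H haG')
  exact mem_biUnion.mpr ⟨G', mem_filter.mpr ⟨hG', hGH ▸ hG'H⟩, haG'⟩

end Grouping

section Averages

variable {α : Type*}

lemma avgOn_le_iff {v : α → ℝ} {G : Finset α} (hG : G.Nonempty) {M : ℝ} :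
    avgOn v G ≤ M ↔ ∑ a ∈ G, v a ≤ G.card * M :=
  inv_mul_le_iff₀ (by exact_mod_cast hG.card_pos)

lemma avgOn_biUnion_le [DecidableEq α] {v : α → ℝ} {S : Finset (Finset α)}
    (hS : (S : Set (Finset α)).PairwiseDisjoint id) (hne : ∀ G ∈ S, G.Nonempty)
    (hSne : (S.biUnion id).Nonempty) {M : ℝ} (hM : ∀ G ∈ S, avgOn v G ≤ M) :
    avgOn v (S.biUnion id) ≤ M := by
  rw [avgOn_le_iff hSne, sum_biUnion hS, card_biUnion hS, Nat.cast_sum, sum_mul]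
  exact sum_le_sum fun G hG => (avgOn_le_iff (hne G hG)).mp (hM G hG)

lemma groupMax_avgOn_le_of_finer [DecidableEq α] {A : Finset α} {𝒢 𝒢' : Finset (Finset α)}
    (h : IsGrouping A 𝒢) (h' : IsGrouping A 𝒢') (hf : Finer 𝒢' 𝒢) (v : α → ℝ) :
    groupMax 𝒢 (avgOn v) ≤ groupMax 𝒢' (avgOn v) := by
  rcases 𝒢.eq_empty_or_nonempty with rfl | hne
  · have h𝒢' : ¬𝒢'.Nonempty := by simp [h'.nonempty_iff, ← h.nonempty_iff]
    simp [groupMax, h𝒢']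
  have hne' : 𝒢'.Nonempty := h'.nonempty_iff.mpr (h.nonempty_iff.mp hne)
  rw [groupMax, groupMax, dif_pos hne, dif_pos hne']
  refine sup'_le hne _ fun G hG => ?_
  have hG_eq := h.biUnion_filter_subset_eq_of_finer h' hf hG
  suffices avgOn v ((𝒢'.filter (· ⊆ G)).biUnion id) ≤ _ by rwa [hG_eq] at this
  refine avgOn_biUnion_le ?_ ?_ ?_ fun G' hG' => le_sup' _ (mem_filter.mp hG').1
  · exact fun G₁ h₁ G₂ h₂ => h'.2.1 G₁ (mem_filter.mp h₁).1 G₂ (mem_filter.mp h₂).1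
  · exact fun G' hG' => h'.1 G' (mem_filter.mp hG').1
  · exact hG_eq.symm ▸ h.1 G hG

end Averages

section Integrability

variable {α X : Type*} [MeasurableSpace X] {μ : Measure X}

lemma integrable_groupMax {𝒢 : Finset (Finset α)} {g : Finset α → X → ℝ}
    (hg : ∀ G ∈ 𝒢, Integrable (g G) μ) :
    Integrable (fun x => groupMax 𝒢 fun G => g G x) μ := by
  unfold groupMax
  split_ifs with hne
  · simp_rw [← Finset.sup'_apply hne g]
    exact sup'_induction (p := fun g => Integrable g μ) hne g (fun _ h₁ _ h₂ => h₁.sup h₂) hg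
  · exact integrable_zero _ _ _

lemma integrable_avgOn {f : α → X → ℝ} {G : Finset α} (hf : ∀ a ∈ G, Integrable (f a) μ) :
    Integrable (fun x => avgOn (fun a => f a x) G) μ :=
  (integrable_finsetSum G hf).const_mul _

lemma optVal_le_of_finer [DecidableEq α] {A : Finset α} {f : α → X → ℝ}
    (hint : ∀ a ∈ A, Integrable (f a) μ) {𝒢 𝒢' : Finset (Finset α)}
    (h : IsGrouping A 𝒢) (h' : IsGrouping A 𝒢') (hf : Finer 𝒢' 𝒢) :
    optVal μ f 𝒢 ≤ optVal μ f 𝒢' := by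
  have hint' {𝒢 : Finset (Finset α)} (h : IsGrouping A 𝒢) :=
    integrable_groupMax (μ := μ) fun G hG =>
      integrable_avgOn (f := f) fun a ha => hint a (h.subset hG ha)
  exact integral_mono (hint' h) (hint' h') fun x => groupMax_avgOn_le_of_finer h h' hf _

end Integrability

theorem optVal_monotone_of_finer_chain_general {α X : Type*} [DecidableEq α] [MeasurableSpace X]
    (μ : Measure X)
    (A : Finset α)
    (f : α → X → ℝ)
    (hint : ∀ a ∈ A, Integrable (f a) μ)
    (k : ℕ) (𝒢 : ℕ → Finset (Finset α))
    (h𝒢 : ∀ t ≤ k, IsGrouping A (𝒢 t))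
    (hfiner : ∀ t < k, Finer (𝒢 (t + 1)) (𝒢 t)) :
    ∀ s t, s ≤ t → t ≤ k → optVal μ f (𝒢 s) ≤ optVal μ f (𝒢 t) := by
  have hmono : MonotoneOn (fun t => optVal μ f (𝒢 t)) (Set.Iic k) :=
    monotoneOn_of_le_add_one Set.ordConnected_Iic fun t _ ht ht' =>
      optVal_le_of_finer hint (h𝒢 t ht) (h𝒢 (t + 1) ht') (hfiner t ht')
  exact fun s t hst htk => hmono (hst.trans htk) htk hst

/-- For a sequence of groupings `𝒢 0, 𝒢 1, …, 𝒢 k` of `A` in which each grouping is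
finer than its predecessor, the optimal values are nondecreasing along the sequence. -/
theorem optVal_monotone_of_finer_chain {α X : Type*} [DecidableEq α] [MeasurableSpace X]
    (μ : Measure X) [IsProbabilityMeasure μ]
    (A : Finset α) (hA : A.Nonempty)
    (f : α → X → ℝ)
    (hmeas : ∀ a ∈ A, Measurable (f a))
    (hint : ∀ a ∈ A, Integrable (f a) μ)
    (k : ℕ) (𝒢 : ℕ → Finset (Finset α))
    (h𝒢 : ∀ t ≤ k, IsGrouping A (𝒢 t))
    (hfiner : ∀ t < k, Finer (𝒢 (t + 1)) (𝒢 t)) :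
    ∀ s t, s ≤ t → t ≤ k → optVal μ f (𝒢 s) ≤ optVal μ f (𝒢 t) :=
  optVal_monotone_of_finer_chain_general μ A f hint k 𝒢 h𝒢 hfiner
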